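/- arXiv:1807.11044 — 5 statements merged into one kernel-verified Lean document; each statement's English description precedes it below -/
import Mathlib

section
/- Let R be a commutative ring, L a finitely generated projective R-module, E a finitely generated projective R-module, and ⟨·,·⟩ : E × E → L an R-bilinear form which is alternating (⟨e,e⟩ = 0 for all e ∈ E) and perfect (the R-linear map E → Hom_R(E, L), e ↦ ⟨·, e⟩, is bijective). Let F be a direct summand of E. Then the R-linear map E → Hom_R(F, L) sending e to the restriction of ⟨·, e⟩ to F is surjective, its kernel equals F^⊥ := {e ∈ E : ⟨f, e⟩ = 0 for all f ∈ F}, and F^⊥ is a direct summand of E. -/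
/-- The orthogonal `F^⊥` of a submodule `F` with respect to an `L`-valued
bilinear form `B` on `E`: the set of `e : E` with `B f e = 0` for all `f ∈ F`. -/
def Bilin.perp {R E L : Type*} [CommRing R] [AddCommGroup E] [Module R E]
    [AddCommGroup L] [Module R L] (B : E →ₗ[R] E →ₗ[R] L) (F : Submodule R E) :
    Submodule R E where
  carrier := {e | ∀ f ∈ F, B f e = 0}
  add_mem' := by
    intro a b ha hb f hf
    simp [map_add, ha f hf, hb f hf]
  zero_mem' := by
    intro f hf
    simp
  smul_mem' := by
    intro c x hx f hf
    simp [map_smul, hx f hf]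

/-!
Restricting `⟨·, e⟩` to `F` is the composite of the isomorphism `E ≃ Hom(E, L)` with
restriction `Hom(E, L) → Hom(F, L)`, and restriction has the section `φ ↦ φ ∘ π` for a
projection `π : E → F` along a complement. A linear map with a section is surjective and
its kernel, which is `F^⊥`, is complemented by the range of the section.
-/

namespace LinearMap

variable {R M N : Type*} [Ring R] [AddCommGroup M] [Module R M] [AddCommGroup N] [Module R N]

theorem isCompl_ker_range_of_comp_eq_id {f : M →ₗ[R] N} {g : N →ₗ[R] M}
    (h : f ∘ₗ g = LinearMap.id) : IsCompl (ker f) (range g) := by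
  have hf : range f = ⊤ := range_eq_top.2 fun y => ⟨g y, congr($h y)⟩
  have hg : ker g = ⊥ := ker_eq_bot_of_inverse h
  have hidem : IsIdempotentElem (g ∘ₗ f) := by
    change g ∘ₗ (f ∘ₗ g) ∘ₗ f = g ∘ₗ f
    rw [h, id_comp]
  simpa only [range_comp_of_range_eq_top g hf, ker_comp_of_ker_eq_bot f hg] using
    (IsIdempotentElem.isCompl hidem).symm

end LinearMap

namespace Submodule

variable {R E L : Type*} [CommRing R] [AddCommGroup E] [Module R E]
  [AddCommGroup L] [Module R L]

theorem lcomp_subtype_comp_lcomp_projectionOnto {p q : Submodule R E} (h : IsCompl p q) :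
    LinearMap.lcomp R L p.subtype ∘ₗ LinearMap.lcomp R L (p.projectionOnto q h) =
      LinearMap.id := by
  ext φ x
  simp [projectionOnto_apply_left]

end Submodule

namespace Bilin

variable {R E L : Type*} [CommRing R] [AddCommGroup E] [Module R E]
  [AddCommGroup L] [Module R L]

theorem ker_flip_compl₂_subtype (B : E →ₗ[R] E →ₗ[R] L) (F : Submodule R E) :
    LinearMap.ker (B.flip.compl₂ F.subtype) = Bilin.perp B F := by
  ext e
  simp only [LinearMap.mem_ker, LinearMap.ext_iff, LinearMap.compl₂_apply,
    LinearMap.flip_apply, Submodule.subtype_apply, LinearMap.zero_apply, Subtype.forall]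
  rfl

theorem exists_flip_compl₂_subtype_comp_eq_id {B : E →ₗ[R] E →ₗ[R] L}
    (hB : Function.Bijective B.flip) {F G : Submodule R E} (hFG : IsCompl F G) :
    ∃ g : (F →ₗ[R] L) →ₗ[R] E, B.flip.compl₂ F.subtype ∘ₗ g = LinearMap.id := by
  let e := LinearEquiv.ofBijective B.flip hB
  refine ⟨e.symm.toLinearMap ∘ₗ LinearMap.lcomp R L (F.projectionOnto G hFG), ?_⟩
  change LinearMap.lcomp R L F.subtype ∘ₗ (e.toLinearMap ∘ₗ e.symm.toLinearMap) ∘ₗ _ = _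
  rw [e.comp_symm, LinearMap.id_comp,
    Submodule.lcomp_subtype_comp_lcomp_projectionOnto]

end Bilin

theorem statement0_general {R E L : Type*} [CommRing R]
    [AddCommGroup E] [Module R E] [AddCommGroup L] [Module R L]
    (B : E →ₗ[R] E →ₗ[R] L)
    (hperf : Function.Bijective ⇑B.flip)
    (F : Submodule R E) (hF : ∃ G : Submodule R E, IsCompl F G) :
    Function.Surjective ⇑(B.flip.compl₂ F.subtype) ∧
    LinearMap.ker (B.flip.compl₂ F.subtype) = Bilin.perp B F ∧
    ∃ G' : Submodule R E, IsCompl (Bilin.perp B F) G' := by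
  obtain ⟨G, hFG⟩ := hF
  obtain ⟨g, hg⟩ := Bilin.exists_flip_compl₂_subtype_comp_eq_id hperf hFG
  have hker := Bilin.ker_flip_compl₂_subtype B F
  refine ⟨fun φ => ⟨g φ, congr($hg φ)⟩, hker, LinearMap.range g, ?_⟩
  rw [← hker]
  exact LinearMap.isCompl_ker_range_of_comp_eq_id hg

/-- for a perfect alternating `L`-valued bilinear form on a finitely
generated projective module `E` and a direct summand `F` of `E`, the map
`e ↦ ⟨·, e⟩|_F` from `E` to `Hom_R(F, L)` is surjective, its kernel is `F^⊥`,
and `F^⊥` is a direct summand of `E`. -/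
theorem statement0 {R E L : Type*} [CommRing R]
    [AddCommGroup E] [Module R E] [AddCommGroup L] [Module R L]
    [Module.Finite R E] [Module.Projective R E]
    [Module.Finite R L] [Module.Projective R L]
    (B : E →ₗ[R] E →ₗ[R] L)
    (halt : ∀ e : E, B e e = 0)
    (hperf : Function.Bijective ⇑B.flip)
    (F : Submodule R E) (hF : ∃ G : Submodule R E, IsCompl F G) :
    Function.Surjective ⇑(B.flip.compl₂ F.subtype) ∧
    LinearMap.ker (B.flip.compl₂ F.subtype) = Bilin.perp B F ∧
    ∃ G' : Submodule R E, IsCompl (Bilin.perp B F) G' :=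
  statement0_general B hperf F hF
end

section
/- Let g ≥ 1 and let M be a positive definite Hermitian complex g×g matrix; define H(v,w) := conj(v)ᵀ M w and E(v,w) := Im H(v,w) for v, w ∈ ℂ^g. Suppose γ₁, …, γ_g, δ₁, …, δ_g ∈ ℂ^g satisfy E(γᵢ, γⱼ) = 0, E(δᵢ, δⱼ) = 0, and E(γᵢ, δⱼ) = δᵢⱼ (Kronecker delta) for all 1 ≤ i, j ≤ g. Then (γ₁, …, γ_g) is a basis of ℂ^g over ℂ, and the unique complex g×g matrix τ determined by δⱼ = Σᵢ τᵢⱼ γᵢ for all j satisfies τᵀ = τ and Im τ is positive definite, i.e. τ ∈ H_g. -/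
open Matrix
open scoped ComplexOrder

/-!
Let `Γ`, `Δ` be the matrices whose columns are the `γᵢ`, `δⱼ`, and `P = Γᴴ M Γ` the Gram matrix
of the `γᵢ`. The hypotheses say `Im P = 0`, `Im (Δᴴ M Δ) = 0` and `Im (Γᴴ M Δ) = 1`. The last one
forces the `γᵢ` to be linearly independent over `ℝ`, so the real matrix `S = Re P` is positive
definite. As `P = S` is then invertible, `Γ` is injective and the `γᵢ` form a `ℂ`-basis.
Writing `Δ = Γ τ` with `τ = X + i Y`, the relation `Im (P τ) = 1` becomes `S Y = 1`, so
`Y = S⁻¹` is symmetric positive definite, and `0 = Im (τᴴ P τ) = Xᵀ S Y - Yᵀ S X = Xᵀ - X`.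
-/

open Complex

lemma Module.Basis.existsUnique_matrix_eq_sum_smul {ι κ R V : Type*} [Fintype ι] [Semiring R]
    [AddCommMonoid V] [Module R V] (b : Module.Basis ι R V) (v : κ → V) :
    ∃! τ : Matrix ι κ R, ∀ j, v j = ∑ i, τ i j • b i :=
  ⟨.of fun i j => b.repr (v j) i, fun j => (b.sum_repr (v j)).symm,
    fun τ hτ => by ext i j; simp only [of_apply, hτ j, b.repr_sum_self]⟩

namespace Matrix

variable {l m n : Type*}

lemma map_re_conjTranspose (A : Matrix m n ℂ) : Aᴴ.map re = (A.map re)ᵀ := by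
  ext i j
  simp

lemma map_im_conjTranspose (A : Matrix m n ℂ) : Aᴴ.map im = -(A.map im)ᵀ := by
  ext i j
  simp

lemma conjTranspose_mul_mul_apply [Fintype m] (A : Matrix m n ℂ) (M : Matrix m m ℂ)
    (B : Matrix m l ℂ) (i : n) (j : l) : (Aᴴ * M * B) i j = star (A.col i) ⬝ᵥ M *ᵥ B.col j := by
  rw [Matrix.mul_assoc, mul_apply]
  simp [mulVec, dotProduct, mul_apply]

section Products

variable [Fintype n]

lemma eq_mul_of_col_eq_sum_smul {R : Type*} [CommSemiring R] {A : Matrix m n R}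
    {B : Matrix m l R} {τ : Matrix n l R} (h : ∀ j, B.col j = ∑ i, τ i j • A.col i) :
    B = A * τ := by
  ext a j
  simpa [mul_apply, mul_comm] using congrFun (h j) a

lemma map_re_mul (A : Matrix m n ℂ) (B : Matrix n l ℂ) :
    (A * B).map re = A.map re * B.map re - A.map im * B.map im := by
  ext i j
  simp [mul_apply, Finset.sum_sub_distrib]

lemma map_im_mul (A : Matrix m n ℂ) (B : Matrix n l ℂ) :
    (A * B).map im = A.map re * B.map im + A.map im * B.map re := by
  ext i j
  simp [mul_apply, Finset.sum_add_distrib]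

lemma im_vecMul_ofReal (x : n → ℝ) (A : Matrix n m ℂ) (j : m) :
    (((ofReal ∘ x) ᵥ* A) j).im = (x ᵥ* A.map im) j := by
  simp [vecMul, dotProduct, im_sum]

lemma re_star_dotProduct_mulVec_ofReal (P : Matrix n n ℂ) (x : n → ℝ) :
    (star (ofReal ∘ x) ⬝ᵥ P *ᵥ (ofReal ∘ x)).re = x ⬝ᵥ P.map re *ᵥ x := by
  simp [mulVec, dotProduct, re_sum, Finset.mul_sum, mul_comm]

end Products

section Gram

variable [Fintype m] [Fintype n]

lemma posDef_map_re_conjTranspose_mul_mul_same {M : Matrix m m ℂ} (hM : M.PosDef)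
    {Γ : Matrix m n ℂ} (hΓ : ∀ x : n → ℝ, Γ *ᵥ (ofReal ∘ x) = 0 → x = 0) :
    ((Γᴴ * M * Γ).map re).PosDef := by
  refine PosDef.of_dotProduct_mulVec_pos ?_ fun x hx => ?_
  · rw [IsHermitian, conjTranspose_eq_transpose_of_trivial, ← map_re_conjTranspose,
      (isHermitian_conjTranspose_mul_mul Γ hM.1).eq]
  · have hΓx : Γ *ᵥ (ofReal ∘ x) ≠ 0 := fun h => hx (hΓ x h)
    have hpos := (Complex.pos_iff.mp (hM.dotProduct_mulVec_pos hΓx)).1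
    rw [star_trivial, ← re_star_dotProduct_mulVec_ofReal]
    simpa only [star_mulVec, dotProduct_mulVec, vecMul_vecMul] using hpos

variable [DecidableEq n]

lemma eq_zero_of_mulVec_ofReal_eq_zero {M : Matrix m m ℂ} {Γ Δ : Matrix m n ℂ}
    (hΓΔ : (Γᴴ * M * Δ).map im = 1) {x : n → ℝ} (hx : Γ *ᵥ (ofReal ∘ x) = 0) : x = 0 := by
  have hrow : (ofReal ∘ x) ᵥ* (Γᴴ * M * Δ) = 0 := by
    have hstar : star (ofReal ∘ x) = ofReal ∘ x := by ext; simp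
    have hxΓ : (ofReal ∘ x) ᵥ* Γᴴ = 0 := by rw [← hstar, ← star_mulVec, hx, star_zero]
    rw [← vecMul_vecMul, ← vecMul_vecMul, hxΓ, zero_vecMul, zero_vecMul]
  funext j
  simpa [hΓΔ, hrow] using (im_vecMul_ofReal x (Γᴴ * M * Δ) j).symm

lemma mulVec_injective_of_posDef_map_re {M : Matrix m m ℂ} {Γ : Matrix m n ℂ}
    (hS : ((Γᴴ * M * Γ).map re).PosDef) (hP : (Γᴴ * M * Γ).map im = 0) :
    Function.Injective Γ.mulVec := by
  have hreal : ofRealHom.mapMatrix ((Γᴴ * M * Γ).map re) = Γᴴ * M * Γ := by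
    ext i j
    exact Complex.ext (by simp) (by simpa using (congrFun (congrFun hP i) j).symm)
  have hunit : IsUnit (Γᴴ * M * Γ) := hreal ▸ hS.isUnit.map _
  refine Function.Injective.of_comp (f := (Γᴴ * M).mulVec) ?_
  simpa [Function.comp_def, mulVec_mulVec] using mulVec_injective_of_isUnit hunit

end Gram

theorem transpose_eq_self_and_posDef_map_im {n : Type*} [Fintype n] [DecidableEq n]
    {P τ : Matrix n n ℂ} (hS : (P.map re).PosDef) (hP : P.map im = 0)
    (hPτ : (P * τ).map im = 1) (hτPτ : (τᴴ * P * τ).map im = 0) :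
    τᵀ = τ ∧ (τ.map im).PosDef := by
  set S := P.map re
  set X := τ.map re
  set Y := τ.map im
  have hSY : S * Y = 1 := by simpa [map_im_mul, hP] using hPτ
  have hY : Y.PosDef := inv_eq_right_inv hSY ▸ hS.inv
  have hYS : Y * S = 1 := mul_eq_one_comm.mp hSY
  have hYt : Yᵀ = Y := by simpa using hY.isHermitian.eq
  have hX : Xᵀ = X := by
    rw [map_im_mul, map_re_mul, map_im_mul, map_re_conjTranspose, map_im_conjTranspose, hP]
      at hτPτ
    simp only [neg_mul, mul_zero, sub_zero, zero_add] at hτPτ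
    change Xᵀ * S * Y + -(Yᵀ * S * X) = 0 at hτPτ
    rwa [Matrix.mul_assoc, hSY, Matrix.mul_one, hYt, hYS, Matrix.one_mul, add_neg_eq_zero]
      at hτPτ
  refine ⟨?_, hY⟩
  ext i j
  exact Complex.ext (congrFun (congrFun hX i) j) (congrFun (congrFun hYt i) j)

end Matrix

theorem statement6_general (g : ℕ)
    (M : Matrix (Fin g) (Fin g) ℂ) (hM : M.PosDef)
    (γ δ : Fin g → (Fin g → ℂ))
    (h1 : ∀ i j, Complex.im (star (γ i) ⬝ᵥ M.mulVec (γ j)) = 0)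
    (h2 : ∀ i j, Complex.im (star (δ i) ⬝ᵥ M.mulVec (δ j)) = 0)
    (h3 : ∀ i j, Complex.im (star (γ i) ⬝ᵥ M.mulVec (δ j)) = if i = j then 1 else 0) :
    (∃ b : Module.Basis (Fin g) ℂ (Fin g → ℂ), ∀ i, b i = γ i) ∧
    (∃! τ : Matrix (Fin g) (Fin g) ℂ, ∀ j, δ j = ∑ i, τ i j • γ i) ∧
    ∀ τ : Matrix (Fin g) (Fin g) ℂ, (∀ j, δ j = ∑ i, τ i j • γ i) →
      τᵀ = τ ∧ (τ.map Complex.im).PosDef := by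
  set Γ : Matrix (Fin g) (Fin g) ℂ := (of γ)ᵀ
  set Δ : Matrix (Fin g) (Fin g) ℂ := (of δ)ᵀ
  have hΓΓ : (Γᴴ * M * Γ).map im = 0 := by
    ext i j; rw [map_apply, conjTranspose_mul_mul_apply]; exact h1 i j
  have hΔΔ : (Δᴴ * M * Δ).map im = 0 := by
    ext i j; rw [map_apply, conjTranspose_mul_mul_apply]; exact h2 i j
  have hΓΔ : (Γᴴ * M * Δ).map im = 1 := by
    ext i j; rw [map_apply, conjTranspose_mul_mul_apply, one_apply]; exact h3 i j
  have hS := posDef_map_re_conjTranspose_mul_mul_same hM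
    fun _ => eq_zero_of_mulVec_ofReal_eq_zero hΓΔ
  have hli : LinearIndependent ℂ γ :=
    mulVec_injective_iff.mp (mulVec_injective_of_posDef_map_re hS hΓΓ)
  let b := basisOfLinearIndependentOfCardEqFinrank' γ hli (by simp)
  have hb : ⇑b = γ := coe_basisOfLinearIndependentOfCardEqFinrank' γ hli _
  refine ⟨⟨b, congrFun hb⟩, hb ▸ b.existsUnique_matrix_eq_sum_smul δ, fun τ hτ => ?_⟩
  have hΔ : Δ = Γ * τ := eq_mul_of_col_eq_sum_smul hτ
  refine transpose_eq_self_and_posDef_map_im hS hΓΓ ?_ ?_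
  · simpa [hΔ, Matrix.mul_assoc] using hΓΔ
  · simpa [hΔ, Matrix.mul_assoc] using hΔΔ

/-- Riemann bilinear relations: if `M` is a positive definite Hermitian
matrix, `E(v,w) = Im(conj(v)ᵀ M w)`, and `γ₁, …, γ_g, δ₁, …, δ_g` form a symplectic
family for `E`, then `(γ₁, …, γ_g)` is a basis of `ℂ^g` and the unique matrix `τ`
with `δⱼ = Σᵢ τᵢⱼ γᵢ` is symmetric with positive definite imaginary part. -/
theorem statement6 (g : ℕ) (hg : 1 ≤ g)
    (M : Matrix (Fin g) (Fin g) ℂ) (hM : M.PosDef)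
    (γ δ : Fin g → (Fin g → ℂ))
    (h1 : ∀ i j, Complex.im (star (γ i) ⬝ᵥ M.mulVec (γ j)) = 0)
    (h2 : ∀ i j, Complex.im (star (δ i) ⬝ᵥ M.mulVec (δ j)) = 0)
    (h3 : ∀ i j, Complex.im (star (γ i) ⬝ᵥ M.mulVec (δ j)) = if i = j then 1 else 0) :
    (∃ b : Module.Basis (Fin g) ℂ (Fin g → ℂ), ∀ i, b i = γ i) ∧
    (∃! τ : Matrix (Fin g) (Fin g) ℂ, ∀ j, δ j = ∑ i, τ i j • γ i) ∧
    ∀ τ : Matrix (Fin g) (Fin g) ℂ, (∀ j, δ j = ∑ i, τ i j • γ i) →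
      τᵀ = τ ∧ (τ.map Complex.im).PosDef :=
  statement6_general g M hM γ δ h1 h2 h3
end

section
/- Let g ≥ 1. For every δ = (A B; C D) ∈ Sp_{2g}(ℂ), the set U_δ := {τ ∈ H_g : Cτ + D is invertible} is an open, dense, and connected subset of H_g (with the topology induced from the space of complex g×g matrices). -/
open Matrix

noncomputable section

/-- The standard symplectic matrix `J = (0 1; −1 0)` in `g × g` block form. -/
def Jm (R : Type*) [CommRing R] (g : ℕ) :
    Matrix (Fin g ⊕ Fin g) (Fin g ⊕ Fin g) R :=
  fromBlocks 0 1 (-1) 0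

/-- The complex symplectic group `Sp_{2g}(ℂ)` as a set of matrices. -/
def SpSet (g : ℕ) : Set (Matrix (Fin g ⊕ Fin g) (Fin g ⊕ Fin g) ℂ) :=
  {M | M * Jm ℂ g * Mᵀ = Jm ℂ g}

/-- The Siegel upper half-space `H_g`: symmetric complex matrices with positive
definite imaginary part. -/
def SiegelUpperHalf (g : ℕ) : Set (Matrix (Fin g) (Fin g) ℂ) :=
  {τ | τᵀ = τ ∧ (τ.map Complex.im).PosDef}

/-- The automorphy factor `j(σ, τ) = Cτ + D` for `σ = (A B; C D)`. -/
def jmat {g : ℕ} (σ : Matrix (Fin g ⊕ Fin g) (Fin g ⊕ Fin g) ℂ)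
    (τ : Matrix (Fin g) (Fin g) ℂ) : Matrix (Fin g) (Fin g) ℂ :=
  σ.toBlocks₂₁ * τ + σ.toBlocks₂₂

/-! Write `C, D` for the bottom blocks of `δ`. Symplecticity gives `C Dᵀ = D Cᵀ` and
`C X + D Y = 1` for some `X, Y`; reducing `C` to a diagonal matrix by invertible row and column
operations, one writes down a symmetric `τ` with `C τ + D` invertible.

On a complex line `z ↦ τ₁ + z (τ₂ - τ₁)` through such a point, `det (C τ + D)` is a nonzero
polynomial in `z` and so has finitely many zeros, while `H_g` is convex and contains a
neighbourhood of each of its points in every such line. Moving from `i • 1 ∈ H_g` slightly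
towards that symmetric `τ` gives a point of `U_δ`, and moving from any point of `H_g` slightly
towards a point of `U_δ` shows density. Two points of `U_δ` span a line whose trace in `H_g` is
a convex planar set containing a non-real point, and such a set minus countably many points is
path-connected. -/

open Filter Topology Set

section Polynomial

open Polynomial

variable {n K : Type*} [Fintype n] [DecidableEq n] [Field K]

theorem Matrix.finite_setOf_det_add_smul_eq_zero (N₀ N₁ : Matrix n n K) {z₀ : K}
    (hz₀ : (N₀ + z₀ • N₁).det ≠ 0) : {z : K | (N₀ + z • N₁).det = 0}.Finite := by
  set p : K[X] := (N₀.map C + (X : K[X]) • N₁.map C).det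
  have hp : ∀ z, p.eval z = (N₀ + z • N₁).det := fun z ↦ by
    rw [← coe_evalRingHom, RingHom.map_det]
    congr 1
    ext i j
    simp only [RingHom.mapMatrix_apply, map_apply, add_apply, smul_apply, smul_eq_mul,
      coe_evalRingHom, eval_add, eval_mul, eval_C, eval_X]
  have hp0 : p ≠ 0 := fun h ↦ hz₀ (by rw [← hp, h, eval_zero])
  exact (finite_setOfPred_isRoot hp0).subset fun z hz ↦ by simpa [hp] using hz

theorem Matrix.eventually_det_add_smul_ne_zero [TopologicalSpace K] [T1Space K]
    (N₀ N₁ : Matrix n n K) {z₀ : K} (hz₀ : (N₀ + z₀ • N₁).det ≠ 0) (a : K) :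
    ∀ᶠ z in 𝓝[≠] a, (N₀ + z • N₁).det ≠ 0 :=
  nhdsNE_le_cofinite a (finite_setOf_det_add_smul_eq_zero N₀ N₁ hz₀).compl_mem_cofinite

end Polynomial

theorem Matrix.mul_add_smul_add {n R : Type*} [Fintype n] [CommSemiring R]
    (C D τ Δ : Matrix n n R) (z : R) : C * (τ + z • Δ) + D = C * τ + D + z • (C * Δ) := by
  rw [Matrix.mul_add, Matrix.mul_smul, add_right_comm]

theorem Matrix.isHermitian_map_im {n : Type*} {τ : Matrix n n ℂ} (hτ : τᵀ = τ) :
    (τ.map Complex.im).IsHermitian := by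
  rw [IsHermitian, conjTranspose_eq_transpose_of_trivial, ← transpose_map, hτ]

-- The quadratic form is positive on the compact unit sphere, hence so are nearby ones.
theorem Matrix.PosDef.eventually_nhds {n : Type*} [Fintype n] {A : Matrix n n ℝ}
    (hA : A.PosDef) : ∀ᶠ M in 𝓝 A, M.IsHermitian → M.PosDef := by
  have hcont : Continuous fun p : Matrix n n ℝ × (n → ℝ) ↦ p.2 ⬝ᵥ p.1 *ᵥ p.2 := by fun_prop
  have hsphere : ∀ᶠ M in 𝓝 A, ∀ y ∈ Metric.sphere (0 : n → ℝ) 1, 0 < y ⬝ᵥ M *ᵥ y := by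
    refine (isCompact_sphere 0 1).eventually_forall_of_forall_eventually fun y hy ↦ ?_
    have hy0 : y ≠ 0 := ne_zero_of_mem_unit_sphere ⟨y, hy⟩
    exact continuousAt_const.eventually_lt hcont.continuousAt
      (by simpa using hA.dotProduct_mulVec_pos hy0)
  filter_upwards [hsphere] with M hM hherm
  refine .of_dotProduct_mulVec_pos hherm fun x hx ↦ ?_
  have hxn : 0 < ‖x‖ := norm_pos_iff.mpr hx
  have := hM (‖x‖⁻¹ • x) (by simp [norm_smul, hxn.ne'])
  rw [mulVec_smul, dotProduct_smul, smul_dotProduct, smul_eq_mul, smul_eq_mul] at this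
  simpa using pos_of_mul_pos_right (pos_of_mul_pos_right this (by positivity)) (by positivity)

theorem Convex.joinedIn_diff_countable {E : Type*} [AddCommGroup E] [Module ℝ E]
    [TopologicalSpace E] [ContinuousAdd E] [ContinuousSMul ℝ E] {Ω s : Set E}
    (hΩ : Convex ℝ Ω) (hs : s.Countable) {c x y : E} (hxy : LinearIndependent ℝ ![x, y])
    (hm : c - x ∈ Ω \ s) (hp : c + x ∈ Ω \ s) (hy : c + y ∈ Ω) :
    JoinedIn (Ω \ s) (c - x) (c + x) := by
  -- The segments from `c + e` to the points `c + t • y` meet pairwise only at `c + e`.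
  have hbad : ∀ e : E, c + e ∉ s → LinearIndependent ℝ ![e, y] →
      {t : ℝ | (segment ℝ (c + e) (c + t • y) ∩ s).Nonempty}.Countable := by
    intro e he hey
    refine countable_ofPred_nonempty_of_disjoint (fun t t' htt' ↦ ?_)
      (fun t ↦ inter_subset_right) hs
    rw [Function.onFun, disjoint_iff_inter_eq_empty, inter_inter_inter_comm, inter_self,
      segment_inter_eq_endpoint_of_linearIndependent_of_ne hey htt'.symm,
      singleton_inter_eq_empty.2 he]
  have hxy' : LinearIndependent ℝ ![-x, y] := by
    convert hxy.units_smul ![-1, 1]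
    ext i
    fin_cases i <;> simp
  rw [sub_eq_add_neg] at hm ⊢
  obtain ⟨t, ⟨ht0, ht1⟩, ht⟩ := (((hbad x hp.2 hxy).union (hbad (-x) hm.2 hxy')).dense_compl
    ℝ).inter_open_nonempty (Ioo 0 1) isOpen_Ioo (nonempty_Ioo.2 zero_lt_one)
  simp only [compl_union, mem_inter_iff, mem_compl_iff, mem_ofPred_eq,
    not_nonempty_iff_eq_empty] at ht
  have hc : c ∈ Ω := by
    convert hΩ hm.1 hp.1 (a := 1 / 2) (b := 1 / 2) (by norm_num) (by norm_num) (by norm_num)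
      using 1
    module
  have hz : c + t • y ∈ Ω := hΩ.add_smul_mem hc hy ⟨ht0.le, ht1.le⟩
  have hjoin : ∀ e, c + e ∈ Ω → segment ℝ (c + e) (c + t • y) ∩ s = ∅ →
      JoinedIn (Ω \ s) (c + e) (c + t • y) := fun e he hes ↦
    .of_segment_subset <| subset_sdiff.2
      ⟨hΩ.segment_subset he hz, disjoint_iff_inter_eq_empty.2 hes⟩
  exact (hjoin (-x) hm.1 ht.2).trans (hjoin x hp.1 ht.1).symm

namespace Matrix

variable {K n : Type*} [Field K] [Fintype n] [DecidableEq n]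

theorem eq_zero_of_vecMul_eq_zero_of_isUnit {C D X Y : Matrix n n K}
    (h : IsUnit (C * X + D * Y)) {v : n → K} (hC : v ᵥ* C = 0) (hD : v ᵥ* D = 0) : v = 0 := by
  have hv : v ᵥ* (C * X + D * Y) = 0 := by
    rw [vecMul_add, ← vecMul_vecMul, ← vecMul_vecMul, hC, hD, zero_vecMul, zero_vecMul, add_zero]
  exact vecMul_injective_iff_isUnit.2 h (hv.trans (zero_vecMul _).symm)

-- The columns of `M` indexed by `d ≠ 0` are unit vectors, so a left kernel vector of `M` is
-- supported where `d = 0`; there it kills both `diagonal d` and `D`.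
theorem isUnit_of_forall_apply_eq_ite [DecidableEq K] {d : n → K} {D M : Matrix n n K}
    (hcop : ∃ X Y, IsUnit (diagonal d * X + D * Y))
    (hvanish : ∀ i j, d i = 0 → d j ≠ 0 → D i j = 0)
    (hM : ∀ i j, M i j = if d i ≠ 0 ∧ d j ≠ 0 then (1 : Matrix n n K) i j else D i j) :
    IsUnit M := by
  refine (isUnit_iff_isUnit_det _).2 (isUnit_iff_ne_zero.2 fun hdet ↦ ?_)
  obtain ⟨v, hv0, hv⟩ := exists_vecMul_eq_zero_iff.2 hdet
  have hsupp : ∀ j, d j ≠ 0 → v j = 0 := fun j hj ↦ by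
    have hcol : ∀ i, M i j = (1 : Matrix n n K) i j := fun i ↦ by
      by_cases hi : d i = 0
      · rw [hM, if_neg (by tauto), hvanish i j hi hj, one_apply_ne (by rintro rfl; exact hj hi)]
      · rw [hM, if_pos ⟨hi, hj⟩]
    calc v j = (v ᵥ* 1) j := by rw [vecMul_one]
      _ = (v ᵥ* M) j := by simp only [vecMul, dotProduct, hcol]
      _ = 0 := congrFun hv j
  obtain ⟨X, Y, hXY⟩ := hcop
  refine hv0 (eq_zero_of_vecMul_eq_zero_of_isUnit hXY ?_ ?_)
  · ext j
    by_cases hj : d j = 0 <;> simp [vecMul_diagonal, hj, hsupp]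
  · rw [← hv]
    ext j
    refine Finset.sum_congr rfl fun i _ ↦ ?_
    show v i * D i j = v i * M i j
    by_cases hi : d i = 0
    · rw [hM, if_neg (by tauto)]
    · rw [hsupp i hi, zero_mul, zero_mul]

theorem exists_transpose_eq_isUnit_diagonal_mul_add {d : n → K} {D : Matrix n n K}
    (hsymm : diagonal d * Dᵀ = D * diagonal d)
    (hcop : ∃ X Y, IsUnit (diagonal d * X + D * Y)) :
    ∃ τ : Matrix n n K, τᵀ = τ ∧ IsUnit (diagonal d * τ + D) := by
  classical
  have hrel : ∀ i j, d i * D j i = D i j * d j := fun i j ↦ by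
    simpa using congrFun (congrFun hsymm i) j
  set τ : Matrix n n K := of fun i j ↦
    if d i ≠ 0 ∧ d j ≠ 0 then ((1 : Matrix n n K) i j - D i j) / d i else 0
  have hτ : τᵀ = τ := by
    ext i j
    obtain rfl | hij := eq_or_ne i j
    · rfl
    simp only [τ, transpose_apply, of_apply, one_apply_ne hij, one_apply_ne hij.symm,
      and_comm (a := d j ≠ 0)]
    split_ifs with h
    · rw [div_eq_div_iff h.2 h.1]
      linear_combination (hrel i j).symm
    · rfl
  refine ⟨τ, hτ, isUnit_of_forall_apply_eq_ite hcop
    (fun i j hi hj ↦ by simpa [hi, hj] using (hrel i j).symm) fun i j ↦ ?_⟩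
  simp only [τ, add_apply, diagonal_mul, of_apply]
  split_ifs with h
  · field_simp [h.1]
    ring
  · simp

theorem exists_units_mul_mul_eq_diagonal (C : Matrix n n K) :
    ∃ (P Q : (Matrix n n K)ˣ) (d : n → K), (P : Matrix n n K) * C * Q = diagonal d := by
  obtain ⟨L, L', d, h⟩ := Pivot.exists_list_transvec_mul_mul_list_transvec_eq_diagonal C
  have hunit (L : List (TransvectionStruct n K)) :
      IsUnit (L.map TransvectionStruct.toMatrix).prod := by
    rw [isUnit_iff_isUnit_det, TransvectionStruct.det_toMatrix_prod]
    exact isUnit_one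
  exact ⟨(hunit L).unit, (hunit L').unit, d, h⟩

theorem exists_transpose_eq_isUnit_mul_add {C D : Matrix n n K} (hsymm : C * Dᵀ = D * Cᵀ)
    (hcop : ∃ X Y, IsUnit (C * X + D * Y)) :
    ∃ τ : Matrix n n K, τᵀ = τ ∧ IsUnit (C * τ + D) := by
  obtain ⟨P, Q, d, hd⟩ := exists_units_mul_mul_eq_diagonal C
  set p : Matrix n n K := ↑P
  set p' : Matrix n n K := ↑P⁻¹
  set q : Matrix n n K := ↑Q
  set q' : Matrix n n K := ↑Q⁻¹
  have hp (X : Matrix n n K) : p' * (p * X) = X := by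
    rw [← Matrix.mul_assoc, Units.inv_mul, one_mul]
  have hq (X : Matrix n n K) : q * (q' * X) = X := by
    rw [← Matrix.mul_assoc, Units.mul_inv, one_mul]
  have hq' (X : Matrix n n K) : q' * (q * X) = X := by
    rw [← Matrix.mul_assoc, Units.inv_mul, one_mul]
  have hqT : q'ᵀ * qᵀ = 1 := by rw [← transpose_mul, Units.mul_inv, transpose_one]
  have hqT' (X : Matrix n n K) : q'ᵀ * (qᵀ * X) = X := by
    rw [← Matrix.mul_assoc, hqT, one_mul]
  have hC : C = p' * diagonal d * q' := by
    rw [← hd]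
    simp only [Matrix.mul_assoc, hp, Units.mul_inv, Matrix.mul_one, q, q']
  -- Writing `τ = q τ' qᵀ`, the pair `(C, D)` becomes `(diagonal d, p D q'ᵀ)`.
  obtain ⟨τ', hτ', hunit⟩ :
      ∃ τ' : Matrix n n K, τ'ᵀ = τ' ∧ IsUnit (diagonal d * τ' + p * D * q'ᵀ) := by
    refine exists_transpose_eq_isUnit_diagonal_mul_add ?_ ?_
    · calc diagonal d * (p * D * q'ᵀ)ᵀ = p * C * q * (q' * Dᵀ * pᵀ) := by
            rw [← hd]; simp only [transpose_mul, transpose_transpose, Matrix.mul_assoc]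
        _ = p * (C * Dᵀ) * pᵀ := by simp only [Matrix.mul_assoc, hq]
        _ = p * (D * Cᵀ) * pᵀ := by rw [hsymm]
        _ = p * D * q'ᵀ * (qᵀ * Cᵀ * pᵀ) := by simp only [Matrix.mul_assoc, hqT']
        _ = p * D * q'ᵀ * diagonal d := by
            rw [← diagonal_transpose, ← hd]; simp only [transpose_mul, Matrix.mul_assoc]
    · obtain ⟨X, Y, hXY⟩ := hcop
      refine ⟨q' * X, qᵀ * Y, ?_⟩
      rw [← hd]
      simp only [Matrix.mul_assoc, hq, hqT', ← Matrix.mul_add]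
      exact P.isUnit.mul hXY
  refine ⟨q * τ' * qᵀ, by simp only [transpose_mul, transpose_transpose, hτ', Matrix.mul_assoc],
    ?_⟩
  have : C * (q * τ' * qᵀ) + D = p' * (diagonal d * τ' + p * D * q'ᵀ) * qᵀ := by
    rw [hC]
    simp only [Matrix.mul_add, Matrix.add_mul, Matrix.mul_assoc, hp, hq', hqT, Matrix.mul_one]
  rw [this]
  exact ((P⁻¹).isUnit.mul hunit).mul ((isUnit_transpose _).2 Q.isUnit)

end Matrix

namespace SpSet

variable {g : ℕ} {δ : Matrix (Fin g ⊕ Fin g) (Fin g ⊕ Fin g) ℂ}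

theorem fromBlocks_mul_Jm_mul_transpose (hδ : δ ∈ SpSet g) :
    fromBlocks (-δ.toBlocks₁₂ * δ.toBlocks₁₁ᵀ + δ.toBlocks₁₁ * δ.toBlocks₁₂ᵀ)
      (-δ.toBlocks₁₂ * δ.toBlocks₂₁ᵀ + δ.toBlocks₁₁ * δ.toBlocks₂₂ᵀ)
      (-δ.toBlocks₂₂ * δ.toBlocks₁₁ᵀ + δ.toBlocks₂₁ * δ.toBlocks₁₂ᵀ)
      (-δ.toBlocks₂₂ * δ.toBlocks₂₁ᵀ + δ.toBlocks₂₁ * δ.toBlocks₂₂ᵀ) =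
    fromBlocks 0 1 (-1) 0 := by
  have h : δ * Jm ℂ g * δᵀ = Jm ℂ g := hδ
  rw [← fromBlocks_toBlocks δ, Jm, fromBlocks_transpose, fromBlocks_multiply,
    fromBlocks_multiply] at h
  simpa using h

theorem toBlocks₂₁_mul_transpose (hδ : δ ∈ SpSet g) :
    δ.toBlocks₂₁ * δ.toBlocks₂₂ᵀ = δ.toBlocks₂₂ * δ.toBlocks₂₁ᵀ := by
  have := congrArg toBlocks₂₂ (fromBlocks_mul_Jm_mul_transpose hδ)
  simp only [toBlocks_fromBlocks₂₂, Matrix.neg_mul] at this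
  exact (neg_add_eq_zero.1 this).symm

theorem toBlocks₂₁_mul_add_toBlocks₂₂_mul (hδ : δ ∈ SpSet g) :
    δ.toBlocks₂₁ * -δ.toBlocks₁₂ᵀ + δ.toBlocks₂₂ * δ.toBlocks₁₁ᵀ = 1 := by
  have := congrArg toBlocks₂₁ (fromBlocks_mul_Jm_mul_transpose hδ)
  simp only [toBlocks_fromBlocks₂₁, Matrix.neg_mul] at this
  rw [Matrix.mul_neg, ← neg_neg (1 : Matrix (Fin g) (Fin g) ℂ), ← this]
  abel

end SpSet

namespace SiegelUpperHalf

variable {g : ℕ}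

theorem convex : Convex ℝ (SiegelUpperHalf g) := by
  refine convex_iff_forall_pos.2 fun τ₁ h₁ τ₂ h₂ a b ha hb _ ↦ ⟨?_, ?_⟩
  · simp [h₁.1, h₂.1]
  · have : (a • τ₁ + b • τ₂).map Complex.im =
        a • τ₁.map Complex.im + b • τ₂.map Complex.im := by
      ext i j
      simp
    rw [this]
    exact (h₁.2.smul ha).add (h₂.2.smul hb)

theorem eventually_add_smul_mem {τ Δ : Matrix (Fin g) (Fin g) ℂ} (hτ : τ ∈ SiegelUpperHalf g)
    (hΔ : Δᵀ = Δ) : ∀ᶠ z in 𝓝 (0 : ℂ), τ + z • Δ ∈ SiegelUpperHalf g := by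
  have hsymm (z : ℂ) : (τ + z • Δ)ᵀ = τ + z • Δ := by simp [hτ.1, hΔ]
  have hlim : Tendsto (fun z : ℂ ↦ (τ + z • Δ).map Complex.im) (𝓝 0)
      (𝓝 (τ.map Complex.im)) := by
    have : Continuous fun z : ℂ ↦ (τ + z • Δ).map Complex.im := by fun_prop
    simpa using this.tendsto 0
  filter_upwards [hlim.eventually hτ.2.eventually_nhds] with z hz
  exact ⟨hsymm z, hz (isHermitian_map_im (hsymm z))⟩

theorem I_smul_one_mem : Complex.I • (1 : Matrix (Fin g) (Fin g) ℂ) ∈ SiegelUpperHalf g := by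
  refine ⟨by simp, ?_⟩
  have : (Complex.I • (1 : Matrix (Fin g) (Fin g) ℂ)).map Complex.im = 1 := by
    ext i j
    by_cases h : i = j <;> simp [h, one_apply]
  rw [this]
  exact PosDef.one

theorem convex_setOf_add_smul_mem (τ Δ : Matrix (Fin g) (Fin g) ℂ) :
    Convex ℝ {z : ℂ | τ + z • Δ ∈ SiegelUpperHalf g} := fun z₁ h₁ z₂ h₂ a b ha hb hab ↦ by
  have : τ + (a • z₁ + b • z₂) • Δ = a • (τ + z₁ • Δ) + b • (τ + z₂ • Δ) := by
    simp only [add_smul, smul_assoc, smul_add]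
    rw [add_add_add_comm, ← add_smul, hab, one_smul]
  rw [mem_ofPred_eq, this]
  exact convex h₁ h₂ ha hb hab

theorem exists_ne_zero_add_smul_sub_mem {τa τb : Matrix (Fin g) (Fin g) ℂ}
    (ha : τa ∈ SiegelUpperHalf g) (hb : τb ∈ SiegelUpperHalf g) :
    ∃ ε : ℝ, ε ≠ 0 ∧ τa + ((1 / 2 : ℂ) + ε * Complex.I) • (τb - τa) ∈ SiegelUpperHalf g := by
  have hmid : τa + (1 / 2 : ℂ) • (τb - τa) ∈ SiegelUpperHalf g := by
    convert convex ha hb (a := 1 / 2) (b := 1 / 2) (by norm_num) (by norm_num) (by norm_num)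
      using 1
    module
  have hlim : Tendsto (fun ε : ℝ ↦ (ε : ℂ) * Complex.I) (𝓝[≠] 0) (𝓝 0) := by
    have : Continuous fun ε : ℝ ↦ (ε : ℂ) * Complex.I := by fun_prop
    simpa using (this.tendsto 0).mono_left nhdsWithin_le_nhds
  obtain ⟨ε, hεmem, hε⟩ := ((hlim.eventually (eventually_add_smul_mem (Δ := τb - τa) hmid
    (by rw [transpose_sub, hb.1, ha.1]))).and self_mem_nhdsWithin).exists
  exact ⟨ε, hε, by simpa only [add_smul, add_assoc] using hεmem⟩

variable (C D : Matrix (Fin g) (Fin g) ℂ)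

/-- The set `U_δ`, for `C, D` the bottom blocks of `δ`. -/
def detNeZeroLocus : Set (Matrix (Fin g) (Fin g) ℂ) :=
  SiegelUpperHalf g ∩ {τ | (C * τ + D).det ≠ 0}

theorem eventually_add_smul_sub_mem_detNeZeroLocus {τ₁ τ₂ : Matrix (Fin g) (Fin g) ℂ}
    (h₁ : τ₁ ∈ SiegelUpperHalf g) (h₂ : τ₂ᵀ = τ₂) (hdet : (C * τ₂ + D).det ≠ 0) :
    ∀ᶠ z in 𝓝[≠] (0 : ℂ), τ₁ + z • (τ₂ - τ₁) ∈ detNeZeroLocus C D := by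
  have hdet' : (C * τ₁ + D + (1 : ℂ) • (C * (τ₂ - τ₁))).det ≠ 0 := by
    rwa [← mul_add_smul_add, one_smul, add_sub_cancel]
  filter_upwards [nhdsWithin_le_nhds <| eventually_add_smul_mem (Δ := τ₂ - τ₁) h₁
      (by rw [transpose_sub, h₂, h₁.1]),
    eventually_det_add_smul_ne_zero _ _ hdet' 0] with z hz hzdet
  exact ⟨hz, by rwa [mem_ofPred_eq, mul_add_smul_add]⟩

theorem exists_mem_detNeZeroLocus {τ : Matrix (Fin g) (Fin g) ℂ} (hτ : τᵀ = τ)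
    (hdet : (C * τ + D).det ≠ 0) : (detNeZeroLocus C D).Nonempty :=
  let ⟨_, h⟩ := (eventually_add_smul_sub_mem_detNeZeroLocus C D I_smul_one_mem hτ hdet).exists
  ⟨_, h⟩

theorem subset_closure_detNeZeroLocus (hU : (detNeZeroLocus C D).Nonempty) :
    SiegelUpperHalf g ⊆ closure (detNeZeroLocus C D) := by
  obtain ⟨τ₀, h₀, hdet⟩ := hU
  intro τ hτ
  have hlim : Tendsto (fun z : ℂ ↦ τ + z • (τ₀ - τ)) (𝓝[≠] 0) (𝓝 τ) := by
    have : Continuous fun z : ℂ ↦ τ + z • (τ₀ - τ) := by fun_prop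
    simpa using (this.tendsto 0).mono_left nhdsWithin_le_nhds
  exact mem_closure_of_tendsto hlim
    (eventually_add_smul_sub_mem_detNeZeroLocus C D hτ h₀.1 hdet)

theorem joinedIn_detNeZeroLocus {τa τb : Matrix (Fin g) (Fin g) ℂ}
    (ha : τa ∈ detNeZeroLocus C D) (hb : τb ∈ detNeZeroLocus C D) :
    JoinedIn (detNeZeroLocus C D) τa τb := by
  set Ω := {z : ℂ | τa + z • (τb - τa) ∈ SiegelUpperHalf g}
  set s := {z : ℂ | (C * τa + D + z • (C * (τb - τa))).det = 0}
  have hs : s.Countable :=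
    (finite_setOf_det_add_smul_eq_zero _ _ (z₀ := 0) (by simpa using ha.2)).countable
  obtain ⟨ε, hε, hεΩ⟩ := exists_ne_zero_add_smul_sub_mem ha.1 hb.1
  have hind : LinearIndependent ℝ ![(1 / 2 : ℂ), ε * Complex.I] :=
    LinearIndependent.pair_iff.2 fun a b hab ↦ by simpa [Complex.ext_iff, hε] using hab
  have h₀ : (0 : ℂ) ∈ Ω \ s := ⟨by simpa [Ω] using ha.1, by simpa [s] using ha.2⟩
  have h₁ : (1 : ℂ) ∈ Ω \ s :=
    ⟨by simpa [Ω] using hb.1, by simpa [s, ← mul_add_smul_add] using hb.2⟩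
  have hjoin := (convex_setOf_add_smul_mem τa (τb - τa)).joinedIn_diff_countable hs hind
    (by rwa [sub_self]) (by rwa [add_halves]) hεΩ
  convert (hjoin.map (f := fun z : ℂ ↦ τa + z • (τb - τa)) (by fun_prop)).mono ?_ using 1
  · simp
  · norm_num
  rintro _ ⟨z, ⟨hzΩ, hzs⟩, rfl⟩
  exact ⟨hzΩ, by rwa [mem_ofPred_eq, mul_add_smul_add]⟩

theorem isPathConnected_detNeZeroLocus (hU : (detNeZeroLocus C D).Nonempty) :
    IsPathConnected (detNeZeroLocus C D) :=
  isPathConnected_iff.2 ⟨hU, fun _ ha _ hb ↦ joinedIn_detNeZeroLocus C D ha hb⟩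

end SiegelUpperHalf

theorem statement9_general (g : ℕ)
    (δ : Matrix (Fin g ⊕ Fin g) (Fin g ⊕ Fin g) ℂ) (hδ : δ ∈ SpSet g) :
    IsOpen {τ : SiegelUpperHalf g | IsUnit (jmat δ (τ : Matrix (Fin g) (Fin g) ℂ)).det} ∧
    Dense {τ : SiegelUpperHalf g | IsUnit (jmat δ (τ : Matrix (Fin g) (Fin g) ℂ)).det} ∧
    IsConnected {τ : SiegelUpperHalf g |
      IsUnit (jmat δ (τ : Matrix (Fin g) (Fin g) ℂ)).det} := by
  set C := δ.toBlocks₂₁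
  set D := δ.toBlocks₂₂
  have hset : {τ : SiegelUpperHalf g | IsUnit (jmat δ (τ : Matrix (Fin g) (Fin g) ℂ)).det} =
      Subtype.val ⁻¹' {τ | (C * τ + D).det ≠ 0} := by
    ext τ
    simp [jmat, C, D, isUnit_iff_ne_zero]
  obtain ⟨τ, hτ, hunit⟩ := Matrix.exists_transpose_eq_isUnit_mul_add
    (SpSet.toBlocks₂₁_mul_transpose hδ)
    ⟨_, _, (SpSet.toBlocks₂₁_mul_add_toBlocks₂₂_mul hδ) ▸ isUnit_one⟩
  have hne := SiegelUpperHalf.exists_mem_detNeZeroLocus C D hτ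
    ((isUnit_iff_isUnit_det _).1 hunit).ne_zero
  rw [hset]
  refine ⟨?_, ?_, ?_⟩
  · exact (isOpen_ne_fun (by fun_prop) continuous_const).preimage continuous_subtype_val
  · rw [Subtype.dense_iff, Subtype.image_preimage_coe]
    exact SiegelUpperHalf.subset_closure_detNeZeroLocus C D hne
  · refine IsPathConnected.isConnected ?_
    rw [Topology.IsInducing.subtypeVal.isPathConnected_iff, Subtype.image_preimage_coe]
    exact SiegelUpperHalf.isPathConnected_detNeZeroLocus C D hne

/-- for every `δ ∈ Sp_{2g}(ℂ)`, the set
`U_δ = {τ ∈ H_g : Cτ + D invertible}` is open, dense, and connected in `H_g`. -/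
theorem statement9 (g : ℕ) (hg : 1 ≤ g)
    (δ : Matrix (Fin g ⊕ Fin g) (Fin g ⊕ Fin g) ℂ) (hδ : δ ∈ SpSet g) :
    IsOpen {τ : SiegelUpperHalf g | IsUnit (jmat δ (τ : Matrix (Fin g) (Fin g) ℂ)).det} ∧
    Dense {τ : SiegelUpperHalf g | IsUnit (jmat δ (τ : Matrix (Fin g) (Fin g) ℂ)).det} ∧
    IsConnected {τ : SiegelUpperHalf g |
      IsUnit (jmat δ (τ : Matrix (Fin g) (Fin g) ℂ)).det} :=
  statement9_general g δ hδ
end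
end

section
/- Let g ≥ 1. The group Sp_{2g}(ℤ) is Zariski-dense in Sp_{2g,ℂ}: for every polynomial P with complex coefficients in the 4g² matrix entries, if P vanishes at every integer matrix M ∈ M_{2g}(ℤ) satisfying M J Mᵀ = J (evaluated via the inclusion ℤ ⊆ ℂ), then P vanishes at every complex matrix N ∈ M_{2g}(ℂ) satisfying N J Nᵀ = J. -/
/-!
Over any field the symplectic group is generated by the symplectic transvections
`x ↦ x + t ω(x, v) v`, where `ω(x, y) = x ⬝ J y`: a symplectic `S ≠ 1` can be multiplied by at
most two transvections so that its fixed subspace becomes strictly larger. Hence every complex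
symplectic matrix is a value of the polynomial map `(vᵢ, tᵢ)ᵢ ↦ ∏ᵢ T(vᵢ, tᵢ)`, which has integer
coefficients and sends integral points to integral symplectic matrices. Composing `P` with this map
gives a polynomial vanishing on all integral points, hence the zero polynomial.
-/

open Matrix

noncomputable section

open MvPolynomial

namespace Matrix

theorem exists_dotProduct_ne_zero_and_ne_zero {n R : Type*} [Fintype n] [DecidableEq n]
    [Semiring R] {u w : n → R} (hu : u ≠ 0) (hw : w ≠ 0) :
    ∃ y, y ⬝ᵥ u ≠ 0 ∧ y ⬝ᵥ w ≠ 0 := by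
  obtain ⟨i, hi⟩ := Function.ne_iff.1 hu
  obtain ⟨j, hj⟩ := Function.ne_iff.1 hw
  by_cases hiw : Pi.single i 1 ⬝ᵥ w = 0
  · by_cases hju : Pi.single j 1 ⬝ᵥ u = 0
    · refine ⟨Pi.single i 1 + Pi.single j 1, ?_, ?_⟩ <;>
        simp_all [add_dotProduct, single_dotProduct]
    · exact ⟨Pi.single j 1, hju, by simpa [single_dotProduct] using hj⟩
  · exact ⟨Pi.single i 1, by simpa [single_dotProduct] using hi, hiw⟩

end Matrix

namespace MvPolynomial

theorem eq_zero_of_forall_eval_intCast_eq_zero {σ K : Type*} [CommRing K] [IsDomain K]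
    [CharZero K] {Q : MvPolynomial σ K} (h : ∀ z : σ → ℤ, eval (fun i => (z i : K)) Q = 0) :
    Q = 0 := by
  refine funext_set (fun _ => Set.range ((↑) : ℤ → K))
    (fun _ => Set.infinite_range_of_injective Int.cast_injective) fun x hx => ?_
  choose z hz using fun i => hx i trivial
  obtain rfl : x = fun i => (z i : K) := by ext i; exact (hz i).symm
  exact h z

theorem aeval_intCast {τ R : Type*} [CommRing R] (z : τ → ℤ) (p : MvPolynomial τ ℤ) :
    aeval (fun i => (z i : R)) p = eval z p := by
  induction p using MvPolynomial.induction_on <;> simp_all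

theorem eval_aeval_eq_zero_of_forall_int {τ ι K : Type*} [CommRing K] [IsDomain K] [CharZero K]
    (F : ι → MvPolynomial τ ℤ) (P : MvPolynomial ι K)
    (h : ∀ z : τ → ℤ, eval (fun i => (eval z (F i) : K)) P = 0) (x : τ → K) :
    eval (fun i => aeval x (F i)) P = 0 := by
  have hQ : ∀ y : τ → K, eval y (bind₁ (fun i => map (Int.castRingHom K) (F i)) P) =
      eval (fun i => aeval y (F i)) P := by
    intro y
    change aeval y _ = _
    rw [aeval_bind₁]
    simp [aeval_def]
  have hzero : bind₁ (fun i => map (Int.castRingHom K) (F i)) P = 0 :=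
    eq_zero_of_forall_eval_intCast_eq_zero fun z => by
      simp only [hQ, ← h z, aeval_intCast]
  rw [← hQ, hzero, map_zero]

end MvPolynomial

namespace SymplecticGroup

variable {l R : Type*} [Fintype l] [DecidableEq l] [CommRing R]

theorem dotProduct_J_mulVec_self (v : l ⊕ l → R) : v ⬝ᵥ J l R *ᵥ v = 0 := by
  simp [J, fromBlocks_mulVec, dotProduct, Fintype.sum_sum_type, mul_comm, neg_mulVec]

theorem mulVec_dotProduct_J_mulVec_mulVec {S : Matrix (l ⊕ l) (l ⊕ l) R}
    (hS : S ∈ symplecticGroup l R) (x y : l ⊕ l → R) :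
    S *ᵥ x ⬝ᵥ J l R *ᵥ (S *ᵥ y) = x ⬝ᵥ J l R *ᵥ y := by
  rw [← vecMul_transpose, ← dotProduct_mulVec, mulVec_mulVec, mulVec_mulVec, mem_iff'.1 hS]

variable (l) in
def symplecticTransvection (v : l ⊕ l → R) (t : R) : Matrix (l ⊕ l) (l ⊕ l) R :=
  1 + t • vecMulVec v (J l R *ᵥ v)

theorem symplecticTransvection_mulVec (v : l ⊕ l → R) (t : R) (x : l ⊕ l → R) :
    symplecticTransvection l v t *ᵥ x = x + (t * (x ⬝ᵥ J l R *ᵥ v)) • v := by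
  rw [symplecticTransvection, add_mulVec, one_mulVec, smul_mulVec, vecMulVec_mulVec,
    dotProduct_comm]
  ext i
  simp only [Pi.add_apply, Pi.smul_apply, op_smul_eq_smul, smul_eq_mul]
  ring

theorem symplecticTransvection_mul (v : l ⊕ l → R) (s t : R) :
    symplecticTransvection l v s * symplecticTransvection l v t =
      symplecticTransvection l v (s + t) := by
  have h : vecMulVec v (J l R *ᵥ v) * vecMulVec v (J l R *ᵥ v) = 0 := by
    rw [vecMulVec_mul_vecMulVec, dotProduct_comm, dotProduct_J_mulVec_self, zero_smul,
      vecMulVec_zero]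
  simp only [symplecticTransvection, add_mul, mul_add, one_mul, mul_one, smul_mul_smul_comm, h,
    smul_zero, add_zero, add_smul]
  abel

theorem symplecticTransvection_zero (v : l ⊕ l → R) : symplecticTransvection l v 0 = 1 := by
  simp [symplecticTransvection]

theorem symplecticTransvection_mem (v : l ⊕ l → R) (t : R) :
    symplecticTransvection l v t ∈ symplecticGroup l R := by
  have hA : vecMulVec v (J l R *ᵥ v) * J l R = vecMulVec v v := by
    rw [vecMulVec_mul, ← mulVec_transpose, J_transpose, neg_mulVec, mulVec_mulVec, J_squared,
      neg_mulVec, one_mulVec, neg_neg]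
  have hB : J l R * vecMulVec (J l R *ᵥ v) v = -vecMulVec v v := by
    rw [mul_vecMulVec, mulVec_mulVec, J_squared, neg_mulVec, one_mulVec]
    ext; simp
  have hC : vecMulVec v v * vecMulVec (J l R *ᵥ v) v = 0 := by
    rw [vecMulVec_mul_vecMulVec, dotProduct_J_mulVec_self, zero_smul, vecMulVec_zero]
  rw [mem_iff, symplecticTransvection, transpose_add, transpose_smul, transpose_vecMulVec]
  simp only [transpose_one, add_mul, mul_add, one_mul, mul_one, smul_mul_assoc, mul_smul_comm,
    hA, hB, hC]
  module

theorem map_symplecticTransvection {S : Type*} [CommRing S] (f : R →+* S) (v : l ⊕ l → R)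
    (t : R) :
    (symplecticTransvection l v t).map f = symplecticTransvection l (f ∘ v) (f t) := by
  ext i j
  simp [symplecticTransvection, vecMulVec_apply, one_apply, apply_ite f, RingHom.map_mulVec]

variable (l R) in
def symplecticTransvections : Set (Matrix (l ⊕ l) (l ⊕ l) R) :=
  Set.range fun p : (l ⊕ l → R) × R => symplecticTransvection l p.1 p.2

theorem mem_closure_of_symplecticTransvection_mul_mem {S : Matrix (l ⊕ l) (l ⊕ l) R}
    (v : l ⊕ l → R) (t : R)
    (h : symplecticTransvection l v t * S ∈ Submonoid.closure (symplecticTransvections l R)) :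
    S ∈ Submonoid.closure (symplecticTransvections l R) := by
  have hS : S = symplecticTransvection l v (-t) * (symplecticTransvection l v t * S) := by
    rw [← mul_assoc, symplecticTransvection_mul, neg_add_cancel, symplecticTransvection_zero,
      one_mul]
  rw [hS]
  exact mul_mem (Submonoid.subset_closure ⟨(v, -t), rfl⟩) h

variable (l) in
def genericSymplecticTransvectionProduct (n : ℕ) :
    Matrix (l ⊕ l) (l ⊕ l) (MvPolynomial (Fin n × Option (l ⊕ l)) ℤ) :=
  (List.ofFn fun i => symplecticTransvection l (fun j => X (i, some j)) (X (i, none))).prod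

theorem map_genericSymplecticTransvectionProduct {n : ℕ}
    (f : MvPolynomial (Fin n × Option (l ⊕ l)) ℤ →+* R) :
    (genericSymplecticTransvectionProduct l n).map f =
      (List.ofFn fun i =>
        symplecticTransvection l (fun j => f (X (i, some j))) (f (X (i, none)))).prod := by
  rw [genericSymplecticTransvectionProduct, ← RingHom.mapMatrix_apply, map_list_prod,
    List.map_ofFn]
  congr 2
  ext i : 1
  exact map_symplecticTransvection f _ _

theorem aeval_genericSymplecticTransvectionProduct {n : ℕ} (x : Fin n × Option (l ⊕ l) → R)
    (a b : l ⊕ l) :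
    aeval x (genericSymplecticTransvectionProduct l n a b) =
      (List.ofFn fun i => symplecticTransvection l (fun j => x (i, some j)) (x (i, none))).prod
        a b := by
  simpa using congrFun₂ (map_genericSymplecticTransvectionProduct (aeval x).toRingHom) a b

section Field

variable {K : Type*} [Field K]

theorem mulVec_ne_zero {S : Matrix (l ⊕ l) (l ⊕ l) K} (hS : S ∈ symplecticGroup l K)
    {v : l ⊕ l → K} (hv : v ≠ 0) : S *ᵥ v ≠ 0 := by
  have hinj := mulVec_injective_iff_isUnit.2 ((isUnit_iff_isUnit_det S).2 (symplectic_det hS))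
  exact fun h => hv (hinj (h.trans (mulVec_zero S).symm))

theorem fixedSubmodule_le_symplecticTransvection_mul {S : Matrix (l ⊕ l) (l ⊕ l) K}
    (hS : S ∈ symplecticGroup l K) (x : l ⊕ l → K) (t : K) :
    (toLin' S).fixedSubmodule ≤
      (toLin' (symplecticTransvection l (S *ᵥ x - x) t * S)).fixedSubmodule := by
  intro y hy
  simp only [LinearMap.mem_fixedSubmodule_iff, toLin'_apply] at hy ⊢
  have hyx : y ⬝ᵥ J l K *ᵥ (S *ᵥ x - x) = 0 := by
    rw [mulVec_sub, dotProduct_sub, sub_eq_zero]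
    conv_lhs => rw [← hy]
    exact mulVec_dotProduct_J_mulVec_mulVec hS y x
  rw [← mulVec_mulVec, hy, symplecticTransvection_mulVec, hyx, mul_zero, zero_smul, add_zero]

theorem exists_fixedSubmodule_lt_symplecticTransvection_mul {S : Matrix (l ⊕ l) (l ⊕ l) K}
    (hS : S ∈ symplecticGroup l K) {x : l ⊕ l → K}
    (hx : x ⬝ᵥ J l K *ᵥ (S *ᵥ x - x) ≠ 0) :
    ∃ v t, (toLin' S).fixedSubmodule <
      (toLin' (symplecticTransvection l v t * S)).fixedSubmodule := by
  set v := S *ᵥ x - x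
  -- `T(v, t)` sends `S x = x + v` to `x + (1 + t ω(x, v)) v`, which is `x` for this `t`.
  refine ⟨v, -(x ⬝ᵥ J l K *ᵥ v)⁻¹, SetLike.lt_iff_le_and_exists.2
    ⟨fixedSubmodule_le_symplecticTransvection_mul hS x _, x, ?_, ?_⟩⟩
  · have hSx : S *ᵥ x = x + v := by simp [v]
    simp only [LinearMap.mem_fixedSubmodule_iff, toLin'_apply]
    rw [← mulVec_mulVec, symplecticTransvection_mulVec, hSx, add_dotProduct,
      dotProduct_J_mulVec_self, add_zero, neg_mul, inv_mul_cancel₀ hx]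
    module
  · intro hfix
    rw [LinearMap.mem_fixedSubmodule_iff, toLin'_apply] at hfix
    simp [v, hfix] at hx

theorem exists_symplecticTransvection_mul_not_isotropic {S : Matrix (l ⊕ l) (l ⊕ l) K}
    (hS : S ∈ symplecticGroup l K) (hS1 : S ≠ 1)
    (hiso : ∀ x, x ⬝ᵥ J l K *ᵥ (S *ᵥ x - x) = 0) :
    ∃ v t, (toLin' S).fixedSubmodule ≤
      (toLin' (symplecticTransvection l v t * S)).fixedSubmodule ∧
      ∃ y, y ⬝ᵥ J l K *ᵥ ((symplecticTransvection l v t * S) *ᵥ y - y) ≠ 0 := by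
  obtain ⟨x, hx⟩ : ∃ x, S *ᵥ x - x ≠ 0 := by
    by_contra! h
    exact hS1 (ext_iff_mulVec.2 fun x => by simpa [sub_eq_zero] using h x)
  set v := S *ᵥ x - x
  have hJv : J l K *ᵥ v ≠ 0 := mulVec_ne_zero (J_mem l K) hx
  obtain ⟨y, hy, hSy⟩ := exists_dotProduct_ne_zero_and_ne_zero hJv
    (mulVec_ne_zero (transpose_mem hS) hJv)
  -- `ω(y, (T(v, 1) S - 1) y) = ω(y, (S - 1) y) + ω(S y, v) ω(y, v)`, and the first term vanishes.
  refine ⟨v, 1, fixedSubmodule_le_symplecticTransvection_mul hS x 1, y, ?_⟩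
  rw [dotProduct_mulVec, vecMul_transpose] at hSy
  rw [← mulVec_mulVec, symplecticTransvection_mulVec, add_sub_right_comm, mulVec_add,
    dotProduct_add, hiso, zero_add, mulVec_smul, dotProduct_smul, smul_eq_mul, one_mul]
  exact mul_ne_zero hSy hy

theorem symplecticGroup_le_closure_symplecticTransvections :
    symplecticGroup l K ≤ Submonoid.closure (symplecticTransvections l K) := by
  intro S hS
  generalize hW : (toLin' S).fixedSubmodule = W
  induction W using WellFoundedGT.induction generalizing S with
  | ind W ih =>
    have descend : ∀ S' ∈ symplecticGroup l K, W < (toLin' S').fixedSubmodule →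
        S' ∈ Submonoid.closure (symplecticTransvections l K) :=
      fun S' hS' hlt => ih _ hlt hS' rfl
    subst hW
    by_cases hS1 : S = 1
    · exact hS1 ▸ one_mem _
    by_cases hiso : ∀ x, x ⬝ᵥ J l K *ᵥ (S *ᵥ x - x) = 0
    · obtain ⟨v, t, hle, y, hy⟩ := exists_symplecticTransvection_mul_not_isotropic hS hS1 hiso
      have hS' := mul_mem (symplecticTransvection_mem v t) hS
      obtain ⟨v', t', hlt⟩ := exists_fixedSubmodule_lt_symplecticTransvection_mul hS' hy
      exact mem_closure_of_symplecticTransvection_mul_mem v t <|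
        mem_closure_of_symplecticTransvection_mul_mem v' t' <|
          descend _ (mul_mem (symplecticTransvection_mem v' t') hS') (hle.trans_lt hlt)
    · obtain ⟨x, hx⟩ := not_forall.1 hiso
      obtain ⟨v, t, hlt⟩ := exists_fixedSubmodule_lt_symplecticTransvection_mul hS hx
      exact mem_closure_of_symplecticTransvection_mul_mem v t <|
        descend _ (mul_mem (symplecticTransvection_mem v t) hS) hlt

theorem exists_list_prod_symplecticTransvection {S : Matrix (l ⊕ l) (l ⊕ l) K}
    (hS : S ∈ symplecticGroup l K) :
    ∃ L : List ((l ⊕ l → K) × K), (L.map fun p => symplecticTransvection l p.1 p.2).prod = S := by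
  have h := symplecticGroup_le_closure_symplecticTransvections hS
  rw [symplecticTransvections, ← FreeMonoid.mrange_lift] at h
  obtain ⟨w, rfl⟩ := h
  exact ⟨w.toList, (FreeMonoid.lift_apply _ w).symm⟩

theorem eval_eq_zero_of_forall_int [CharZero K] (P : MvPolynomial ((l ⊕ l) × (l ⊕ l)) K)
    (h : ∀ M ∈ symplecticGroup l ℤ, eval (fun q => (M q.1 q.2 : K)) P = 0)
    {N : Matrix (l ⊕ l) (l ⊕ l) K} (hN : N ∈ symplecticGroup l K) :
    eval (fun q => N q.1 q.2) P = 0 := by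
  obtain ⟨L, rfl⟩ := exists_list_prod_symplecticTransvection hN
  rw [← List.ofFn_getElem_eq_map]
  have := eval_aeval_eq_zero_of_forall_int
    (fun q => genericSymplecticTransvectionProduct l L.length q.1 q.2) P (fun z => ?_)
    (fun a => a.2.elim L[a.1].2 L[a.1].1)
  · simpa [aeval_genericSymplecticTransvectionProduct] using this
  · have hM := Submonoid.list_prod_mem (symplecticGroup l ℤ)
      (l := List.ofFn fun i => symplecticTransvection l (fun j => z (i, some j)) (z (i, none)))
      (by simp [List.mem_ofFn, symplecticTransvection_mem])
    simpa only [← aeval_genericSymplecticTransvectionProduct z, aeval_eq_eval] using h _ hM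

end Field

end SymplecticGroup

theorem Jm_eq_neg_J (R : Type*) [CommRing R] (g : ℕ) : Jm R g = -J (Fin g) R := by
  simp [Jm, J, fromBlocks_neg]

theorem mem_symplecticGroup_iff_Jm {R : Type*} [CommRing R] {g : ℕ}
    {M : Matrix (Fin g ⊕ Fin g) (Fin g ⊕ Fin g) R} :
    M ∈ symplecticGroup (Fin g) R ↔ M * Jm R g * Mᵀ = Jm R g := by
  rw [SymplecticGroup.mem_iff, Jm_eq_neg_J, mul_neg, neg_mul, neg_inj]

theorem statement12_general (g : ℕ)
    (P : MvPolynomial ((Fin g ⊕ Fin g) × (Fin g ⊕ Fin g)) ℂ)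
    (hvanish : ∀ M : Matrix (Fin g ⊕ Fin g) (Fin g ⊕ Fin g) ℤ,
      M * Jm ℤ g * Mᵀ = Jm ℤ g →
      MvPolynomial.eval (fun q => (M q.1 q.2 : ℂ)) P = 0) :
    ∀ N : Matrix (Fin g ⊕ Fin g) (Fin g ⊕ Fin g) ℂ,
      N * Jm ℂ g * Nᵀ = Jm ℂ g →
      MvPolynomial.eval (fun q => N q.1 q.2) P = 0 :=
  fun _ hN => SymplecticGroup.eval_eq_zero_of_forall_int P
    (fun M hM => hvanish M (mem_symplecticGroup_iff_Jm.1 hM)) (mem_symplecticGroup_iff_Jm.2 hN)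

/-- `Sp_{2g}(ℤ)` is Zariski-dense in `Sp_{2g, ℂ}`: any polynomial in
the matrix entries vanishing on all integral symplectic matrices vanishes on all
complex symplectic matrices. -/
theorem statement12 (g : ℕ) (hg : 1 ≤ g)
    (P : MvPolynomial ((Fin g ⊕ Fin g) × (Fin g ⊕ Fin g)) ℂ)
    (hvanish : ∀ M : Matrix (Fin g ⊕ Fin g) (Fin g ⊕ Fin g) ℤ,
      M * Jm ℤ g * Mᵀ = Jm ℤ g →
      MvPolynomial.eval (fun q => (M q.1 q.2 : ℂ)) P = 0) :
    ∀ N : Matrix (Fin g ⊕ Fin g) (Fin g ⊕ Fin g) ℂ,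
      N * Jm ℂ g * Nᵀ = Jm ℂ g →
      MvPolynomial.eval (fun q => N q.1 q.2) P = 0 :=
  statement12_general g P hvanish
end
end

section
/- Let F be a totally real number field of degree g over ℚ, i.e. every ring homomorphism F → ℂ takes values in ℝ, and let σ₁, …, σ_g : F → ℝ be its g distinct real embeddings. Let τ₁, …, τ_g ∈ ℂ with Im τⱼ > 0 for every j. Then for all x, y, x', y' ∈ F, ∑_{j=1}^{g} (1/Im τⱼ) · Im( conj(σⱼ(x) + τⱼσⱼ(y)) · (σⱼ(x') + τⱼσⱼ(y')) ) = Tr_{F/ℚ}(x·y' − y·x'), where the trace Tr_{F/ℚ} (a rational number) is regarded as a real number. -/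
open scoped ComplexConjugate

/-!
Writing `v = a + τ b` and `w = a' + τ b'` with `a, b, a', b'` real, one has
`Im(conj v · w) = Im τ · (a b' − b a')`, so the `j`-th summand is `σⱼ(x y' − y x')`.
An injective family of `[F : ℚ]` real embeddings, composed with `ℝ ↪ ℂ`, exhausts the
complex embeddings of `F`, and the sum over all complex embeddings is the trace.
-/

open Module

theorem Complex.im_conj_add_mul_mul_add_mul (τ : ℂ) (a b a' b' : ℝ) :
    (conj ((a : ℂ) + τ * b) * ((a' : ℂ) + τ * b')).im = τ.im * (a * b' - b * a') := by
  simp only [mul_im, mul_re, add_re, add_im, conj_re, conj_im, ofReal_re, ofReal_im]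
  ring

namespace NumberField

theorem sum_embeddings_eq_trace (F A : Type*) [Field F] [NumberField F] [Field A] [CharZero A]
    [IsAlgClosed A] (z : F) :
    ∑ φ : F →+* A, φ z = algebraMap ℚ A (Algebra.trace ℚ F z) := by
  rw [trace_eq_sum_embeddings, ← Equiv.sum_comp (RingHom.equivRatAlgHom F A)]
  rfl

theorem sum_realEmbeddings_eq_trace {F ι : Type*} [Field F] [NumberField F] [Fintype ι]
    (σ : ι → F →+* ℝ) (hσ : Function.Injective σ) (hcard : Fintype.card ι = finrank ℚ F)
    (z : F) :
    ∑ i, σ i z = (Algebra.trace ℚ F z : ℝ) := by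
  let e : ι → F →+* ℂ := fun i => Complex.ofRealHom.comp (σ i)
  have he_inj : Function.Injective e := fun i k h =>
    hσ <| RingHom.ext fun a => Complex.ofReal_injective (RingHom.congr_fun h a)
  have he_bij : Function.Bijective e := (Fintype.bijective_iff_injective_and_card e).2
    ⟨he_inj, by rw [hcard, Embeddings.card]⟩
  apply Complex.ofReal_injective
  calc ((∑ i, σ i z : ℝ) : ℂ) = ∑ i, e i z := by simp [e]
    _ = ∑ φ : F →+* ℂ, φ z := Fintype.sum_bijective e he_bij _ _ fun _ => rfl
    _ = algebraMap ℚ ℂ (Algebra.trace ℚ F z) := sum_embeddings_eq_trace F ℂ z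
    _ = ((Algebra.trace ℚ F z : ℝ) : ℂ) := by simp

end NumberField

theorem statement19_general (F : Type*) [Field F] [NumberField F] (g : ℕ)
    (hdeg : Module.finrank ℚ F = g)
    (σ : Fin g → (F →+* ℝ)) (hσ : Function.Injective σ)
    (τ : Fin g → ℂ) (hτ : ∀ j, 0 < (τ j).im)
    (x y x' y' : F) :
    ∑ j, (1 / (τ j).im) *
        Complex.im ((starRingEnd ℂ) ((σ j x : ℂ) + τ j * (σ j y : ℂ)) *
          ((σ j x' : ℂ) + τ j * (σ j y' : ℂ))) =
      ((Algebra.trace ℚ F (x * y' - y * x') : ℚ) : ℝ) := by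
  have hterm : ∀ j, (1 / (τ j).im) *
      Complex.im ((starRingEnd ℂ) ((σ j x : ℂ) + τ j * (σ j y : ℂ)) *
        ((σ j x' : ℂ) + τ j * (σ j y' : ℂ))) = σ j (x * y' - y * x') := fun j => by
    rw [Complex.im_conj_add_mul_mul_add_mul, one_div, inv_mul_cancel_left₀ (hτ j).ne']
    simp only [map_sub, map_mul]
  rw [Finset.sum_congr rfl fun j _ => hterm j]
  exact NumberField.sum_realEmbeddings_eq_trace σ hσ (by rw [Fintype.card_fin, hdeg]) _

/-- let `F` be a totally real number field of degree `g` with distinct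
real embeddings `σ₁, …, σ_g`, and `τ₁, …, τ_g` complex numbers with positive
imaginary parts. Then for all `x, y, x', y' ∈ F`,
`∑ⱼ (1/Im τⱼ) Im(conj(σⱼx + τⱼσⱼy)(σⱼx' + τⱼσⱼy')) = Tr_{F/ℚ}(xy' − yx')`. -/
theorem statement19 (F : Type*) [Field F] [NumberField F] (g : ℕ)
    (hdeg : Module.finrank ℚ F = g)
    (htotreal : ∀ φ : F →+* ℂ, ∀ z : F, (φ z).im = 0)
    (σ : Fin g → (F →+* ℝ)) (hσ : Function.Injective σ)
    (τ : Fin g → ℂ) (hτ : ∀ j, 0 < (τ j).im)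
    (x y x' y' : F) :
    ∑ j, (1 / (τ j).im) *
        Complex.im ((starRingEnd ℂ) ((σ j x : ℂ) + τ j * (σ j y : ℂ)) *
          ((σ j x' : ℂ) + τ j * (σ j y' : ℂ))) =
      ((Algebra.trace ℚ F (x * y' - y * x') : ℚ) : ℝ) :=
  statement19_general F g hdeg σ hσ τ hτ x y x' y'
end
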